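/- arXiv:2212.10014 — 2 statements merged into one kernel-verified Lean document; each statement's English description precedes it below -/
import Mathlib

section
/- Suppose 2 ≤ m ≤ n−1 satisfy m² − mn + 2n − 2 > 0 and m² − mn + m + n > 0, and let 0 ≤ a ≤ min{ m/(2(m−1)), 1/(n−m), (m² − mn + m + n)/(2(m² − mn + 2n − 2)) }. Then for the top slice of a modified stable weighted slicing, the extrinsic quantity 𝒱₁ = |II_{Σ₁}|² + Σ_{p=2}^{m} Σ_{q=p+1}^{n} ( II_{Σ₁}(e_p,e_p) II_{Σ₁}(e_q,e_q) − II_{Σ₁}(e_p,e_q)² ) satisfies 𝒱₁ ≥ a H_{Σ₁}² ≥ 0, where {e₁,…,e_n} is an orthonormal basis of T_xN at any x ∈ Σ_m with e_j = ν_j for 1 ≤ j ≤ m. -/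
/-!
**Statement 13 (Extrinsic curvature terms on the top slice, Lemma 5.9).**
Suppose `2 ≤ m ≤ n−1` satisfy `m² − mn + 2n − 2 > 0` and `m² − mn + m + n > 0`, and let
`0 ≤ a ≤ min { m/(2(m−1)), 1/(n−m), (m² − mn + m + n)/(2(m² − mn + 2n − 2)) }`.
Then for the top slice `Σ₁` of a modified stable weighted slicing, the extrinsic quantity
`𝒱₁ = |II_{Σ₁}|² + Σ_{p=2}^{m} Σ_{q=p+1}^{n} ( II(e_p,e_p) II(e_q,e_q) − II(e_p,e_q)² )`
satisfies `𝒱₁ ≥ a H_{Σ₁}² ≥ 0`, where `{e₁,…,e_n}` is an orthonormal basis of `T_x N` at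
any `x ∈ Σ_m` with `e_j = ν_j` for `1 ≤ j ≤ m`.

The estimate is a pointwise algebraic statement about the entries
`II p q = II_{Σ₁}(e_p, e_q)` of the (symmetric) second fundamental form of the top slice
`Σ₁ ⊆ N` in such an orthonormal frame, so we formalize it as such.  We index the frame by
`Fin n` (zero-based), so the paper's index `p ∈ {2, …, n}` corresponds to `1 ≤ (p : ℕ)`,
the normal direction `e₁ = ν₁` corresponding to the index `0`; accordingly
`|II_{Σ₁}|² = Σ_{p,q ≥ 1} II(e_p,e_q)²` and `H_{Σ₁} = Σ_{p ≥ 1} II(e_p,e_p)`.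
-/

private def F1 (n m : ℕ) : Finset (Fin n) :=
  Finset.univ.filter (fun p => 1 ≤ (p : ℕ) ∧ (p : ℕ) < m)

private def F2 (n m : ℕ) : Finset (Fin n) :=
  Finset.univ.filter (fun p => m ≤ (p : ℕ))

private lemma split_single (n m : ℕ) (hm : 1 ≤ m) (f : Fin n → ℝ) :
    (∑ p : Fin n, if 1 ≤ (p : ℕ) then f p else 0)
      = (∑ p ∈ F1 n m, f p) + (∑ p ∈ F2 n m, f p) := by
  simp only [F1, F2, Finset.sum_filter, ← Finset.sum_add_distrib]
  refine Finset.sum_congr rfl fun p _ => ?_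
  split_ifs <;> first | ring1 | (exfalso; omega)

private lemma card_F1 (n m : ℕ) : (F1 n m).card ≤ m - 1 := by
  classical
  have h := Finset.card_le_card_of_injOn (f := Fin.val) (s := F1 n m) (t := Finset.Ico 1 m)
    (by intro p hp; simp [F1] at hp; simp [Finset.mem_Ico]; omega)
    (fun a _ b _ h => Fin.val_injective h)
  simpa using h

private lemma card_F2 (n m : ℕ) : (F2 n m).card ≤ n - m := by
  classical
  have h := Finset.card_le_card_of_injOn (f := Fin.val) (s := F2 n m) (t := Finset.Ico m n)
    (by intro p hp; simp [F2] at hp; simp [Finset.mem_Ico]; omega)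
    (fun a _ b _ h => Fin.val_injective h)
  simpa using h

private lemma T_eq (n m : ℕ) (d : Fin n → ℝ) :
    2 * (∑ p ∈ F1 n m, ∑ q ∈ F1 n m, if (p : ℕ) < (q : ℕ) then d p * d q else 0)
      = (∑ p ∈ F1 n m, d p) ^ 2 - ∑ p ∈ F1 n m, (d p) ^ 2 := by
  classical
  have h1 : (∑ p ∈ F1 n m, ∑ q ∈ F1 n m, d p * d q)
      = (∑ p ∈ F1 n m, ∑ q ∈ F1 n m, if (p : ℕ) < (q : ℕ) then d p * d q else 0)
        + (∑ p ∈ F1 n m, ∑ q ∈ F1 n m, if (q : ℕ) < (p : ℕ) then d p * d q else 0)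
        + (∑ p ∈ F1 n m, ∑ q ∈ F1 n m, if (p : ℕ) = (q : ℕ) then d p * d q else 0) := by
    simp only [← Finset.sum_add_distrib]
    refine Finset.sum_congr rfl fun p _ => Finset.sum_congr rfl fun q _ => ?_
    split_ifs <;> first | ring1 | (exfalso; omega)
  have hsw : (∑ p ∈ F1 n m, ∑ q ∈ F1 n m, if (q : ℕ) < (p : ℕ) then d p * d q else 0)
      = (∑ p ∈ F1 n m, ∑ q ∈ F1 n m, if (p : ℕ) < (q : ℕ) then d p * d q else 0) := by
    rw [Finset.sum_comm]
    exact Finset.sum_congr rfl fun p _ => Finset.sum_congr rfl fun q _ => by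
      split_ifs <;> ring1
  have hdiag : (∑ p ∈ F1 n m, ∑ q ∈ F1 n m, if (p : ℕ) = (q : ℕ) then d p * d q else 0)
      = ∑ p ∈ F1 n m, (d p) ^ 2 := by
    refine Finset.sum_congr rfl fun p hp => ?_
    simp_rw [Fin.val_inj]
    rw [Finset.sum_ite_eq (F1 n m) p (fun q => d p * d q), if_pos hp]
    ring
  have hsq : (∑ p ∈ F1 n m, ∑ q ∈ F1 n m, d p * d q) = (∑ p ∈ F1 n m, d p) ^ 2 := by
    rw [sq, Finset.sum_mul_sum]
  linarith

private lemma Yd_eq (n m : ℕ) (hm : 2 ≤ m) (d : Fin n → ℝ) :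
    (∑ p : Fin n, ∑ q : Fin n,
        if 1 ≤ (p : ℕ) ∧ (p : ℕ) ≤ m - 1 ∧ (p : ℕ) < (q : ℕ) then d p * d q else 0)
      = ((∑ p ∈ F1 n m, d p) ^ 2 - ∑ p ∈ F1 n m, (d p) ^ 2) / 2
        + (∑ p ∈ F1 n m, d p) * (∑ p ∈ F2 n m, d p) := by
  classical
  have hterm : ∀ p q : Fin n,
      (if 1 ≤ (p : ℕ) ∧ (p : ℕ) ≤ m - 1 ∧ (p : ℕ) < (q : ℕ) then d p * d q else 0)
        = (if 1 ≤ (p : ℕ) ∧ (p : ℕ) < m then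
            (if 1 ≤ (q : ℕ) ∧ (q : ℕ) < m then
              (if (p : ℕ) < (q : ℕ) then d p * d q else 0) else 0) else 0)
          + (if 1 ≤ (p : ℕ) ∧ (p : ℕ) < m then
              (if m ≤ (q : ℕ) then d p * d q else 0) else 0) := by
    intro p q
    split_ifs <;> first | ring1 | (exfalso; omega)
  calc (∑ p : Fin n, ∑ q : Fin n,
        if 1 ≤ (p : ℕ) ∧ (p : ℕ) ≤ m - 1 ∧ (p : ℕ) < (q : ℕ) then d p * d q else 0)
      = (∑ p : Fin n, ∑ q : Fin n,
          (if 1 ≤ (p : ℕ) ∧ (p : ℕ) < m then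
            (if 1 ≤ (q : ℕ) ∧ (q : ℕ) < m then
              (if (p : ℕ) < (q : ℕ) then d p * d q else 0) else 0) else 0))
        + (∑ p : Fin n, ∑ q : Fin n,
          (if 1 ≤ (p : ℕ) ∧ (p : ℕ) < m then
            (if m ≤ (q : ℕ) then d p * d q else 0) else 0)) := by
        simp only [← Finset.sum_add_distrib]
        exact Finset.sum_congr rfl fun p _ => Finset.sum_congr rfl fun q _ => hterm p q
    _ = (∑ p ∈ F1 n m, ∑ q ∈ F1 n m, if (p : ℕ) < (q : ℕ) then d p * d q else 0)
        + (∑ p ∈ F1 n m, d p) * (∑ p ∈ F2 n m, d p) := by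
        rw [Finset.sum_mul_sum]
        simp only [F1, F2, Finset.sum_filter]
        congr 1
        · refine Finset.sum_congr rfl fun p _ => ?_
          by_cases hp : 1 ≤ (p : ℕ) ∧ (p : ℕ) < m <;> simp [hp]
        · refine Finset.sum_congr rfl fun p _ => ?_
          by_cases hp : 1 ≤ (p : ℕ) ∧ (p : ℕ) < m <;> simp [hp]
    _ = ((∑ p ∈ F1 n m, d p) ^ 2 - ∑ p ∈ F1 n m, (d p) ^ 2) / 2
        + (∑ p ∈ F1 n m, d p) * (∑ p ∈ F2 n m, d p) := by
        have := T_eq n m d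
        linarith

private lemma quad_aux (α β c x y : ℝ) (hα : 0 ≤ α) (hβ : 0 ≤ β)
    (hd : c ^ 2 ≤ 4 * (α * β)) :
    0 ≤ α * x ^ 2 + c * (x * y) + β * y ^ 2 := by
  rcases eq_or_lt_of_le hα with h | h
  · have hab : α * β = 0 := by rw [← h]; ring
    have hc : c = 0 := by nlinarith [sq_nonneg c]
    rw [hc, ← h]
    simpa using mul_nonneg hβ (sq_nonneg y)
  · nlinarith [sq_nonneg (2 * α * x + c * y),
      mul_nonneg (by nlinarith : (0:ℝ) ≤ 4 * (α * β) - c ^ 2) (sq_nonneg y)]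

private lemma bhj_scalar (M N a ρ σ S₁ S₂ : ℝ) (hM : 2 ≤ M) (hN : M + 1 ≤ N)
    (hD1 : 0 < M ^ 2 - M * N + 2 * N - 2)
    (haA : a ≤ M / (2 * (M - 1))) (haB : a ≤ 1 / (N - M))
    (haC : a ≤ (M ^ 2 - M * N + M + N) / (2 * (M ^ 2 - M * N + 2 * N - 2)))
    (hS1 : ρ ^ 2 ≤ (M - 1) * S₁) (hS2 : σ ^ 2 ≤ (N - M) * S₂) :
    a * (ρ + σ) ^ 2 ≤ S₁ / 2 + S₂ + ρ ^ 2 / 2 + ρ * σ := by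
  have hu : (0:ℝ) < M - 1 := by linarith
  have hv : (0:ℝ) < N - M := by linarith
  have hP : 2 * a * (M - 1) ≤ M := by
    have := (le_div_iff₀ (by linarith : (0:ℝ) < 2 * (M - 1))).mp haA
    linarith
  have hQ : a * (N - M) ≤ 1 := by
    have := (le_div_iff₀ hv).mp haB
    linarith
  have hC : 2 * a * (M ^ 2 - M * N + 2 * N - 2) ≤ M ^ 2 - M * N + M + N := by
    have := (le_div_iff₀ (by linarith : (0:ℝ) < 2 * (M ^ 2 - M * N + 2 * N - 2))).mp haC
    linarith
  have hα : 0 ≤ (M - 2 * a * (M - 1)) * (N - M) := mul_nonneg (by linarith) hv.le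
  have hβ : 0 ≤ 2 * (M - 1) * (1 - a * (N - M)) :=
    mul_nonneg (by linarith) (by linarith)
  have hdiscaux : 0 ≤ 4 * ((M - 1) * (N - M)) *
      ((M ^ 2 - M * N + M + N) - 2 * a * (M ^ 2 - M * N + 2 * N - 2)) :=
    mul_nonneg (mul_nonneg (by norm_num) (mul_nonneg hu.le hv.le)) (by linarith)
  have hdisc : (2 * (M - 1) * (N - M) * (1 - 2 * a)) ^ 2 ≤
      4 * (((M - 2 * a * (M - 1)) * (N - M)) * (2 * (M - 1) * (1 - a * (N - M)))) := by
    nlinarith [hdiscaux]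
  have key := quad_aux _ _ _ ρ σ hα hβ hdisc
  have h2uv : (0:ℝ) < 2 * (M - 1) * (N - M) := by positivity
  have hS1' : 0 ≤ (N - M) * ((M - 1) * S₁ - ρ ^ 2) := mul_nonneg hv.le (by linarith)
  have hS2' : 0 ≤ 2 * (M - 1) * ((N - M) * S₂ - σ ^ 2) := mul_nonneg (by linarith) (by linarith)
  have hfinal : a * (ρ + σ) ^ 2 * (2 * (M - 1) * (N - M)) ≤
      (S₁ / 2 + S₂ + ρ ^ 2 / 2 + ρ * σ) * (2 * (M - 1) * (N - M)) := by
    nlinarith [key, hS1', hS2']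
  exact le_of_mul_le_mul_right hfinal h2uv

theorem extrinsic_top_slice_estimate (n m : ℕ) (hm2 : 2 ≤ m) (hmn : m + 1 ≤ n)
    (h1 : 0 < (m : ℝ) ^ 2 - m * n + 2 * n - 2)
    (h2 : 0 < (m : ℝ) ^ 2 - m * n + m + n)
    (a : ℝ) (ha0 : 0 ≤ a)
    (ha : a ≤ min ((m : ℝ) / (2 * ((m : ℝ) - 1)))
      (min (1 / ((n : ℝ) - m))
        (((m : ℝ) ^ 2 - m * n + m + n) / (2 * ((m : ℝ) ^ 2 - m * n + 2 * n - 2)))))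
    -- the second fundamental form `II_{Σ₁}(e_p, e_q)` of the top slice in the frame `e`
    (II : Fin n → Fin n → ℝ) (hsymm : ∀ p q, II p q = II q p) :
    0 ≤ a * (∑ p : Fin n, if 1 ≤ (p : ℕ) then II p p else 0) ^ 2
    ∧ a * (∑ p : Fin n, if 1 ≤ (p : ℕ) then II p p else 0) ^ 2 ≤
      -- `𝒱₁` :
      (∑ p : Fin n, ∑ q : Fin n,
          if 1 ≤ (p : ℕ) ∧ 1 ≤ (q : ℕ) then (II p q) ^ 2 else 0)
        + ∑ p : Fin n, ∑ q : Fin n,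
            if 1 ≤ (p : ℕ) ∧ (p : ℕ) ≤ m - 1 ∧ (p : ℕ) < (q : ℕ) then
              II p p * II q q - (II p q) ^ 2
            else 0 := by
  classical
  refine ⟨mul_nonneg ha0 (sq_nonneg _), ?_⟩
  have hm1 : 1 ≤ m := by omega
  rw [le_min_iff, le_min_iff] at ha
  obtain ⟨haA, haB, haC⟩ := And.intro ha.1 (And.intro ha.2.1 ha.2.2)
  have hH := split_single n m hm1 (fun p => II p p)
  have hD := split_single n m hm1 (fun p => (II p p) ^ 2)
  have hYd := Yd_eq n m hm2 (fun p => II p p)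
  have hS1nn : (0:ℝ) ≤ ∑ p ∈ F1 n m, (II p p) ^ 2 :=
    Finset.sum_nonneg fun _ _ => sq_nonneg _
  have hS2nn : (0:ℝ) ≤ ∑ p ∈ F2 n m, (II p p) ^ 2 :=
    Finset.sum_nonneg fun _ _ => sq_nonneg _
  have hcard1 : ((F1 n m).card : ℝ) ≤ (m : ℝ) - 1 := by
    have h : ((F1 n m).card : ℝ) ≤ ((m - 1 : ℕ) : ℝ) := Nat.cast_le.mpr (card_F1 n m)
    rwa [Nat.cast_sub hm1, Nat.cast_one] at h
  have hcard2 : ((F2 n m).card : ℝ) ≤ (n : ℝ) - (m : ℝ) := by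
    have h : ((F2 n m).card : ℝ) ≤ ((n - m : ℕ) : ℝ) := Nat.cast_le.mpr (card_F2 n m)
    rwa [Nat.cast_sub (by omega)] at h
  have hCS1 : (∑ p ∈ F1 n m, II p p) ^ 2 ≤ ((m : ℝ) - 1) * ∑ p ∈ F1 n m, (II p p) ^ 2 :=
    le_trans sq_sum_le_card_mul_sum_sq (mul_le_mul_of_nonneg_right hcard1 hS1nn)
  have hCS2 : (∑ p ∈ F2 n m, II p p) ^ 2 ≤ ((n : ℝ) - (m : ℝ)) * ∑ p ∈ F2 n m, (II p p) ^ 2 :=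
    le_trans sq_sum_le_card_mul_sum_sq (mul_le_mul_of_nonneg_right hcard2 hS2nn)
  have hM : (2:ℝ) ≤ (m : ℝ) := by exact_mod_cast hm2
  have hN : (m : ℝ) + 1 ≤ (n : ℝ) := by exact_mod_cast hmn
  have hmain := bhj_scalar (m : ℝ) (n : ℝ) a (∑ p ∈ F1 n m, II p p)
    (∑ p ∈ F2 n m, II p p) (∑ p ∈ F1 n m, (II p p) ^ 2) (∑ p ∈ F2 n m, (II p p) ^ 2)
    hM hN h1 haA haB haC hCS1 hCS2
  -- termwise comparison with the actual right-hand side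
  have step1 : (∑ p : Fin n, ∑ q : Fin n,
      ((if p = q then (if 1 ≤ (p : ℕ) then (II p p) ^ 2 else 0) else 0)
        + (if 1 ≤ (p : ℕ) ∧ (p : ℕ) ≤ m - 1 ∧ (p : ℕ) < (q : ℕ) then II p p * II q q else 0)))
      ≤ (∑ p : Fin n, ∑ q : Fin n, if 1 ≤ (p : ℕ) ∧ 1 ≤ (q : ℕ) then (II p q) ^ 2 else 0)
        + ∑ p : Fin n, ∑ q : Fin n,
            if 1 ≤ (p : ℕ) ∧ (p : ℕ) ≤ m - 1 ∧ (p : ℕ) < (q : ℕ) then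
              II p p * II q q - (II p q) ^ 2 else 0 := by
    rw [← Finset.sum_add_distrib]
    refine Finset.sum_le_sum fun p _ => ?_
    rw [← Finset.sum_add_distrib]
    refine Finset.sum_le_sum fun q _ => ?_
    by_cases hc : 1 ≤ (p : ℕ) ∧ (p : ℕ) ≤ m - 1 ∧ (p : ℕ) < (q : ℕ)
    · have hpq : ¬ p = q := fun h => by subst h; omega
      have h1q : 1 ≤ (p : ℕ) ∧ 1 ≤ (q : ℕ) := by omega
      rw [if_pos hc, if_pos hc, if_neg hpq, if_pos h1q]
      linarith
    · rw [if_neg hc, if_neg hc, add_zero, add_zero]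
      by_cases hpq : p = q
      · subst hpq
        by_cases h1 : 1 ≤ (p : ℕ)
        · simp [h1]
        · simp [h1]
      · rw [if_neg hpq]
        split_ifs
        · positivity
        · exact le_rfl
  have hsplit : (∑ p : Fin n, ∑ q : Fin n,
      ((if p = q then (if 1 ≤ (p : ℕ) then (II p p) ^ 2 else 0) else 0)
        + (if 1 ≤ (p : ℕ) ∧ (p : ℕ) ≤ m - 1 ∧ (p : ℕ) < (q : ℕ) then II p p * II q q else 0)))
      = (∑ p : Fin n, ∑ q : Fin n,
          (if p = q then (if 1 ≤ (p : ℕ) then (II p p) ^ 2 else 0) else 0))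
        + (∑ p : Fin n, ∑ q : Fin n,
          (if 1 ≤ (p : ℕ) ∧ (p : ℕ) ≤ m - 1 ∧ (p : ℕ) < (q : ℕ) then II p p * II q q else 0)) := by
    simp only [Finset.sum_add_distrib]
  have hDq : (∑ p : Fin n, ∑ q : Fin n,
      (if p = q then (if 1 ≤ (p : ℕ) then (II p p) ^ 2 else 0) else 0))
      = ∑ p : Fin n, (if 1 ≤ (p : ℕ) then (II p p) ^ 2 else 0) := by
    refine Finset.sum_congr rfl fun p _ => ?_
    simp [Finset.sum_ite_eq]
  rw [hH]
  linarith [hmain, step1, hsplit, hDq, hD, hYd]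
end

section
/- Let n > m ≥ 2 be integers with m² − mn + 2n − 2 > 0, and let a be a real number with 0 ≤ a ≤ min{ m/(2(m−1)), 1/(n−m), (m² − mn + m + n)/(2(m² − mn + 2n − 2)) }. Then for all real numbers A and B, ( m/(2(m−1)) − a ) A² + ( 1/(n−m) − a ) B² + (1 − 2a) A B ≥ 0. -/
/-!
**Statement 14.**
Let `n > m ≥ 2` be integers with `m² − mn + 2n − 2 > 0`, and let `a` be a real number with
`0 ≤ a ≤ min { m/(2(m−1)), 1/(n−m), (m² − mn + m + n)/(2(m² − mn + 2n − 2)) }`.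
Then for all real numbers `A` and `B`,
`( m/(2(m−1)) − a ) A² + ( 1/(n−m) − a ) B² + (1 − 2a) A B ≥ 0`.

This is the purely algebraic inequality underlying the extrinsic curvature estimate on the
top slice of a modified stable weighted slicing (Lemma 5.9 of the paper).
-/

theorem top_slice_algebraic_inequality (n m : ℤ) (hm : 2 ≤ m) (hmn : m < n)
    (hpos : 0 < (m : ℝ) ^ 2 - m * n + 2 * n - 2)
    (a : ℝ) (ha0 : 0 ≤ a)
    (ha : a ≤ min ((m : ℝ) / (2 * ((m : ℝ) - 1)))
      (min (1 / ((n : ℝ) - m))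
        (((m : ℝ) ^ 2 - m * n + m + n) / (2 * ((m : ℝ) ^ 2 - m * n + 2 * n - 2)))))
    (A B : ℝ) :
    0 ≤ ((m : ℝ) / (2 * ((m : ℝ) - 1)) - a) * A ^ 2
      + (1 / ((n : ℝ) - m) - a) * B ^ 2 + (1 - 2 * a) * A * B := by
  have hm1 : (1:ℝ) < (m:ℝ) := by exact_mod_cast lt_of_lt_of_le one_lt_two hm
  have hnm : (0:ℝ) < (n:ℝ) - m := by
    have : (m:ℝ) < n := by exact_mod_cast hmn
    linarith
  have hm1' : (0:ℝ) < 2 * ((m:ℝ) - 1) := by linarith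
  rcases le_min_iff.mp ha with ⟨ha1, ha23⟩
  rcases le_min_iff.mp ha23 with ⟨ha2, ha3⟩
  set P : ℝ := (m:ℝ) / (2 * ((m:ℝ) - 1)) with hP
  set Q : ℝ := 1 / ((n:ℝ) - m) with hQ
  have hp : 0 ≤ P - a := by linarith
  have hq : 0 ≤ Q - a := by linarith
  have ha3' : 2 * a * ((m:ℝ) ^ 2 - m * n + 2 * n - 2) ≤ (m:ℝ) ^ 2 - m * n + m + n := by
    have := (le_div_iff₀ (by linarith : (0:ℝ) < 2 * ((m:ℝ) ^ 2 - m * n + 2 * n - 2))).mp ha3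
    linarith
  have hPval : P * (2 * ((m:ℝ) - 1)) = (m:ℝ) := by
    rw [hP, div_mul_cancel₀ _ (ne_of_gt hm1')]
  have hQval : Q * ((n:ℝ) - m) = 1 := by
    rw [hQ, div_mul_cancel₀ _ (ne_of_gt hnm)]
  have h1 : (P - a) * (2 * ((m:ℝ) - 1)) = (m:ℝ) - a * (2 * ((m:ℝ) - 1)) := by
    rw [sub_mul, hPval]
  have h2 : (Q - a) * ((n:ℝ) - m) = 1 - a * ((n:ℝ) - m) := by
    rw [sub_mul, hQval]
  have hdisc : (1 - 2 * a) ^ 2 ≤ 4 * (P - a) * (Q - a) := by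
    rw [← mul_le_mul_iff_of_pos_right (mul_pos hm1' hnm)]
    have hprod : 4 * (P - a) * (Q - a) * (2 * ((m:ℝ) - 1) * ((n:ℝ) - m))
        = 4 * ((m:ℝ) - a * (2 * ((m:ℝ) - 1))) * (1 - a * ((n:ℝ) - m)) := by
      calc 4 * (P - a) * (Q - a) * (2 * ((m:ℝ) - 1) * ((n:ℝ) - m))
          = 4 * ((P - a) * (2 * ((m:ℝ) - 1))) * ((Q - a) * ((n:ℝ) - m)) := by ring
        _ = 4 * ((m:ℝ) - a * (2 * ((m:ℝ) - 1))) * (1 - a * ((n:ℝ) - m)) := by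
            rw [h1, h2]
    rw [hprod]
    have hid : 4 * ((m:ℝ) - a * (2 * ((m:ℝ) - 1))) * (1 - a * ((n:ℝ) - m))
        - (1 - 2 * a) ^ 2 * (2 * ((m:ℝ) - 1) * ((n:ℝ) - m))
        = 2 * (((m:ℝ) ^ 2 - m * n + m + n) - 2 * a * ((m:ℝ) ^ 2 - m * n + 2 * n - 2)) := by
      ring
    linarith
  rcases eq_or_lt_of_le hp with hp0 | hp0
  · -- P - a = 0, so (1-2a)^2 ≤ 0, hence 1 - 2a = 0
    have hc : (1 - 2 * a) ^ 2 ≤ 0 := by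
      have : 4 * (P - a) * (Q - a) = 0 := by rw [← hp0]; ring
      linarith
    have hc0 : 1 - 2 * a = 0 := by nlinarith [sq_nonneg (1 - 2 * a)]
    rw [← hp0, hc0]
    have := mul_nonneg hq (sq_nonneg B)
    nlinarith
  · nlinarith [sq_nonneg (2 * (P - a) * A + (1 - 2 * a) * B),
      mul_nonneg (sub_nonneg.mpr hdisc) (sq_nonneg B), hp0]
end
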